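/- Fix σ > 0 and integer d ≥ 1. Define F(ζ) = ln(1 + d·φ_σ(exp ζ)) for ζ ∈ ℝ, where φ_σ(x) = (2/√(2π)) ∫₀^{x/(2σ)} e^{−t²/2} dt. Then F''(ζ) < 0 for all ζ > ln(2σ·r(√(2π)/(2d))), i.e., F is strictly concave on that interval, where r(α) is the unique nonnegative zero of f(ζ,α) = (1−ζ²)(α + ∫₀^ζ e^{−t²/2} dt) − ζ e^{−ζ²/2}. -/

import Mathlib

noncomputable def phi (σ ζ : ℝ) : ℝ :=
  (2 / Real.sqrt (2 * Real.pi)) * ∫ t in (0:ℝ)..(ζ / (2 * σ)), Real.exp (-t ^ 2 / 2)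

noncomputable def f (ζ α : ℝ) : ℝ :=
  (1 - ζ ^ 2) * (α + ∫ t in (0:ℝ)..ζ, Real.exp (-t ^ 2 / 2)) - ζ * Real.exp (-ζ ^ 2 / 2)

noncomputable def F (σ : ℝ) (d : ℕ) (ζ : ℝ) : ℝ :=
  Real.log (1 + (d : ℝ) * phi σ (Real.exp ζ))

/-!
Write `u = exp ζ / (2σ)`, `k = 2d / √(2π)` and `Φ(u) = ∫₀ᵘ e^{-t²/2} dt`, so that
`F = log (1 + k Φ(u))` and `du/dζ = u`. The quotient rule gives
`F'' = k² u e^{-u²/2} f(u, 1/k) / (1 + k Φ(u))²`, and `1/k = √(2π)/(2d)`.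
Since `∂f/∂ζ = -2ζ (α + Φ(ζ)) < 0` for `ζ > 0`, the map `ζ ↦ f(ζ, α)` is strictly decreasing on
`[0, ∞)`, so it is negative beyond its zero `r`; and `ζ > log (2σ r)` means exactly `u > r`.
-/

open Real Set

noncomputable def gaussInt (x : ℝ) : ℝ := ∫ t in (0 : ℝ)..x, exp (-t ^ 2 / 2)

lemma continuous_exp_neg_sq_div_two : Continuous fun t : ℝ => exp (-t ^ 2 / 2) := by fun_prop

lemma hasDerivAt_gaussInt (x : ℝ) : HasDerivAt gaussInt (exp (-x ^ 2 / 2)) x :=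
  (continuous_exp_neg_sq_div_two.integral_hasStrictDerivAt 0 x).hasDerivAt

lemma gaussInt_nonneg {x : ℝ} (hx : 0 ≤ x) : 0 ≤ gaussInt x :=
  intervalIntegral.integral_nonneg hx fun _ _ => (exp_pos _).le

lemma gaussInt_pos {x : ℝ} (hx : 0 < x) : 0 < gaussInt x :=
  intervalIntegral.intervalIntegral_pos_of_pos_on
    (continuous_exp_neg_sq_div_two.intervalIntegrable _ _)
    (fun _ _ => exp_pos _) hx

lemma hasDerivAt_exp_neg_sq_div_two {g : ℝ → ℝ} {g' x : ℝ} (hg : HasDerivAt g g' x) :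
    HasDerivAt (fun y => exp (-g y ^ 2 / 2)) (-(g x * g' * exp (-g x ^ 2 / 2))) x :=
  ((hg.pow 2).neg.div_const 2).exp.congr_deriv (by simp only [Pi.neg_apply, Pi.pow_apply]; ring)

lemma f_eq (ζ α : ℝ) :
    f ζ α = (1 - ζ ^ 2) * (α + gaussInt ζ) - ζ * exp (-ζ ^ 2 / 2) := rfl

lemma hasDerivAt_f (α x : ℝ) :
    HasDerivAt (fun ζ => f ζ α) (-2 * x * (α + gaussInt x)) x := by
  have hsq : HasDerivAt (fun ζ : ℝ => 1 - ζ ^ 2) (-(2 * x)) x := by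
    simpa using (hasDerivAt_pow 2 x).const_sub 1
  exact ((hsq.mul ((hasDerivAt_gaussInt x).const_add α)).sub
    ((hasDerivAt_id x).mul (hasDerivAt_exp_neg_sq_div_two (hasDerivAt_id x)))).congr_deriv
    (by simp only [id]; ring)

lemma strictAntiOn_f {α : ℝ} (hα : 0 ≤ α) : StrictAntiOn (fun ζ => f ζ α) (Ici 0) := by
  refine strictAntiOn_of_deriv_neg (convex_Ici 0)
    (fun x _ => (hasDerivAt_f α x).continuousAt.continuousWithinAt) fun x hx => ?_
  rw [interior_Ici] at hx
  rw [(hasDerivAt_f α x).deriv]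
  have hx : 0 < x := hx
  nlinarith [mul_pos hx (add_pos_of_nonneg_of_pos hα (gaussInt_pos hx))]

lemma f_neg_of_root_lt {α r x : ℝ} (hα : 0 ≤ α) (hr : 0 ≤ r) (hfr : f r α = 0) (hrx : r < x) :
    f x α < 0 :=
  hfr ▸ strictAntiOn_f hα hr (hr.trans hrx.le) hrx

noncomputable def logOneAddGaussExp (k s ζ : ℝ) : ℝ := log (1 + k * gaussInt (exp ζ / s))

lemma F_eq_logOneAddGaussExp (σ : ℝ) (d : ℕ) :
    F σ d = logOneAddGaussExp (d * (2 / √(2 * π))) (2 * σ) := by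
  ext ζ
  simp only [F, phi, logOneAddGaussExp, gaussInt, mul_assoc]

section logOneAddGaussExp

variable {k s : ℝ}

lemma one_add_mul_gaussInt_pos (hk : 0 ≤ k) {x : ℝ} (hx : 0 ≤ x) : 0 < 1 + k * gaussInt x := by
  have := mul_nonneg hk (gaussInt_nonneg hx)
  linarith

lemma hasDerivAt_logOneAddGaussExp (hk : 0 ≤ k) (hs : 0 < s) (ζ : ℝ) :
    HasDerivAt (logOneAddGaussExp k s)
      (k * (exp (-(exp ζ / s) ^ 2 / 2) * (exp ζ / s)) /
        (1 + k * gaussInt (exp ζ / s))) ζ := by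
  have hinner : HasDerivAt (fun ζ => 1 + k * gaussInt (exp ζ / s))
      (k * (exp (-(exp ζ / s) ^ 2 / 2) * (exp ζ / s))) ζ :=
    (((hasDerivAt_gaussInt _).comp ζ ((hasDerivAt_exp ζ).div_const s)).const_mul k).const_add 1
  exact hinner.log (one_add_mul_gaussInt_pos hk (by positivity)).ne'

lemma deriv2_logOneAddGaussExp (hk : 0 < k) (hs : 0 < s) (ζ : ℝ) :
    deriv^[2] (logOneAddGaussExp k s) ζ =
      k ^ 2 * (exp ζ / s) * exp (-(exp ζ / s) ^ 2 / 2) * f (exp ζ / s) k⁻¹ /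
        (1 + k * gaussInt (exp ζ / s)) ^ 2 := by
  have hu : HasDerivAt (fun ζ => exp ζ / s) (exp ζ / s) ζ := (hasDerivAt_exp ζ).div_const s
  have hnum : HasDerivAt (fun ζ => k * (exp (-(exp ζ / s) ^ 2 / 2) * (exp ζ / s)))
      (k * (exp (-(exp ζ / s) ^ 2 / 2) * (exp ζ / s)) * (1 - (exp ζ / s) ^ 2)) ζ :=
    (((hasDerivAt_exp_neg_sq_div_two hu).mul hu).const_mul k).congr_deriv (by ring)
  have hden : HasDerivAt (fun ζ => 1 + k * gaussInt (exp ζ / s))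
      (k * (exp (-(exp ζ / s) ^ 2 / 2) * (exp ζ / s))) ζ :=
    (((hasDerivAt_gaussInt _).comp ζ hu).const_mul k).const_add 1
  have hpos : 0 < 1 + k * gaussInt (exp ζ / s) := one_add_mul_gaussInt_pos hk.le (by positivity)
  rw [Function.iterate_succ_apply, Function.iterate_one,
    funext (fun ζ => (hasDerivAt_logOneAddGaussExp hk.le hs ζ).deriv)]
  refine (hnum.div hden hpos.ne').deriv.trans ?_
  rw [f_eq]
  field_simp

lemma deriv2_logOneAddGaussExp_neg (hk : 0 < k) (hs : 0 < s) {r : ℝ} (hr : 0 ≤ r)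
    (hfr : f r k⁻¹ = 0) {ζ : ℝ} (hζ : log (s * r) < ζ) :
    deriv^[2] (logOneAddGaussExp k s) ζ < 0 := by
  have hru : r < exp ζ / s := by
    rw [lt_div_iff₀ hs, mul_comm]
    exact lt_exp_of_log_lt hζ
  rw [deriv2_logOneAddGaussExp hk hs]
  refine div_neg_of_neg_of_pos (mul_neg_of_pos_of_neg (by positivity) ?_)
    (pow_pos (one_add_mul_gaussInt_pos hk.le (by positivity)) 2)
  exact f_neg_of_root_lt (inv_nonneg.2 hk.le) hr hfr hru

end logOneAddGaussExp

theorem stmt15 (σ : ℝ) (hσ : 0 < σ) (d : ℕ) (hd : 1 ≤ d)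
    (rα : ℝ) (hr0 : 0 ≤ rα) (hrz : f rα (Real.sqrt (2 * Real.pi) / (2 * d)) = 0) :
    (∀ ζ : ℝ, Real.log (2 * σ * rα) < ζ → deriv (deriv (F σ d)) ζ < 0) ∧
    StrictConcaveOn ℝ (Set.Ioi (Real.log (2 * σ * rα))) (F σ d) := by
  have hd₀ : (0 : ℝ) < d := by exact_mod_cast hd
  have hk : 0 < (d : ℝ) * (2 / √(2 * π)) := by positivity
  have hkinv : ((d : ℝ) * (2 / √(2 * π)))⁻¹ = √(2 * π) / (2 * d) := by field_simp
  have hneg : ∀ ζ ∈ Ioi (log (2 * σ * rα)), deriv^[2] (F σ d) ζ < 0 := fun ζ hζ => by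
    rw [F_eq_logOneAddGaussExp]
    exact deriv2_logOneAddGaussExp_neg hk (by positivity) hr0 (hkinv ▸ hrz) hζ
  refine ⟨fun ζ hζ => hneg ζ hζ, strictConcaveOn_of_deriv2_neg' (convex_Ioi _) ?_ hneg⟩
  rw [F_eq_logOneAddGaussExp]
  exact fun ζ _ =>
    (hasDerivAt_logOneAddGaussExp hk.le (by positivity) ζ).continuousAt.continuousWithinAt
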